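/- arXiv:1001.0330 — 2 statements merged into one kernel-verified Lean document; each statement's English description precedes it below -/
import Mathlib

section
/- For every finite simple graph G with at least one edge, ⌈dc₁(G)⌉ = pw₁(G) ≤ re₁(G). -/
/-!
Let `χ` be the chromatic number of `G`. Placing the colour classes of an optimal colouring at the
integers `0, …, χ - 1` gives `dc₁ ≤ pw₁ ≤ χ - 1`. Conversely, every representation yields a
colouring once its shortest relevant distance is rescaled to `1`:
* for `pw₁`, the integer parts of the distances to the leftmost point use `⌊pw-ratio⌋ + 1` colours;
* for `dc₁`, after a shift keeping every fractional part below `1 - 1/(n+1)`, integer parts taken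
  modulo `k` form a colouring as soon as the dc-ratio is below `k - 1 + 1/(n+1)`, so `dc₁ > χ - 2`;
* for `re₁`, points are `1`-separated, so an edge spans at most `⌊re-ratio⌋` ranks, and ranks
  modulo `⌊re-ratio⌋ + 1` form a colouring.
Hence `pw₁ = χ - 1 = ⌈dc₁⌉ ≤ re₁`.
-/

open Real

noncomputable section

/-- The Euclidean plane. -/
abbrev Pt := EuclideanSpace ℝ (Fin 2)

variable {V : Type*} [Fintype V]

/-- A representation is non-edge-degenerate if endpoints of every edge are mapped
to distinct points. -/
def NED (G : SimpleGraph V) (ρ : V → Pt) : Prop := ∀ ⦃u v⦄, G.Adj u v → ρ u ≠ ρ v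

/-- Maximum edge length of a representation. -/
def maxE (G : SimpleGraph V) (ρ : V → Pt) : ℝ :=
  sSup {d | ∃ u v, G.Adj u v ∧ d = dist (ρ u) (ρ v)}

/-- Minimum edge length of a representation. -/
def minE (G : SimpleGraph V) (ρ : V → Pt) : ℝ :=
  sInf {d | ∃ u v, G.Adj u v ∧ d = dist (ρ u) (ρ v)}

/-- Maximum distance between images of two distinct vertices. -/
def maxP (ρ : V → Pt) : ℝ := sSup {d | ∃ u v : V, u ≠ v ∧ d = dist (ρ u) (ρ v)}

/-- Minimum distance between images of two distinct vertices. -/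
def minP (ρ : V → Pt) : ℝ := sInf {d | ∃ u v : V, u ≠ v ∧ d = dist (ρ u) (ρ v)}

/-- The dilation coefficient of a graph. -/
def dc (G : SimpleGraph V) : ℝ :=
  sInf {r | ∃ ρ : V → Pt, NED G ρ ∧ r = maxE G ρ / minE G ρ}

/-- The plane-width of a graph. -/
def pw (G : SimpleGraph V) : ℝ :=
  sInf {r | ∃ ρ : V → Pt, NED G ρ ∧ r = maxP ρ / minE G ρ}

/-- The resolution coefficient of a graph. -/
def re (G : SimpleGraph V) : ℝ :=
  sInf {r | ∃ ρ : V → Pt, Function.Injective ρ ∧ r = maxE G ρ / minP ρ}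

/-- One-dimensional non-edge-degeneracy. -/
def NED1 (G : SimpleGraph V) (ρ : V → ℝ) : Prop := ∀ ⦃u v⦄, G.Adj u v → ρ u ≠ ρ v

def maxE1 (G : SimpleGraph V) (ρ : V → ℝ) : ℝ :=
  sSup {d | ∃ u v, G.Adj u v ∧ d = |ρ u - ρ v|}

def minE1 (G : SimpleGraph V) (ρ : V → ℝ) : ℝ :=
  sInf {d | ∃ u v, G.Adj u v ∧ d = |ρ u - ρ v|}

def maxP1 (ρ : V → ℝ) : ℝ := sSup {d | ∃ u v : V, u ≠ v ∧ d = |ρ u - ρ v|}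

def minP1 (ρ : V → ℝ) : ℝ := sInf {d | ∃ u v : V, u ≠ v ∧ d = |ρ u - ρ v|}

/-- The one-dimensional dilation coefficient. -/
def dc1 (G : SimpleGraph V) : ℝ :=
  sInf {r | ∃ ρ : V → ℝ, NED1 G ρ ∧ r = maxE1 G ρ / minE1 G ρ}

/-- The one-dimensional plane-width ("line-width"). -/
def pw1 (G : SimpleGraph V) : ℝ :=
  sInf {r | ∃ ρ : V → ℝ, NED1 G ρ ∧ r = maxP1 ρ / minE1 G ρ}

/-- The one-dimensional resolution coefficient. -/
def re1 (G : SimpleGraph V) : ℝ :=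
  sInf {r | ∃ ρ : V → ℝ, Function.Injective ρ ∧ r = maxE1 G ρ / minP1 ρ}

open Finset SimpleGraph

omit [Fintype V] in
lemma exists_adj_of_edgeSet_nonempty {G : SimpleGraph V} (hG : G.edgeSet.Nonempty) :
    ∃ u v, G.Adj u v :=
  ne_bot_iff_exists_adj.1 (edgeSet_nonempty.1 hG)

omit [Fintype V] in
lemma exists_injective_real [Countable V] : ∃ ρ : V → ℝ, Function.Injective ρ :=
  let ⟨f, hf⟩ := exists_injective_nat V
  ⟨fun v => f v, Nat.cast_injective.comp hf⟩

lemma finite_setOf_abs_sub (R : V → V → Prop) (ρ : V → ℝ) :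
    {d | ∃ u v, R u v ∧ d = |ρ u - ρ v|}.Finite :=
  (Set.finite_range fun p : V × V => |ρ p.1 - ρ p.2|).subset <| by
    rintro _ ⟨u, v, -, rfl⟩
    exact ⟨(u, v), rfl⟩

lemma abs_div_sub_div {m : ℝ} (hm : 0 < m) (a b : ℝ) : |a / m - b / m| = |a - b| / m := by
  rw [← sub_div, abs_div, abs_of_pos hm]

section Distances

variable {G : SimpleGraph V} {ρ : V → ℝ} {u v : V}

omit [Fintype V] in
lemma nonempty_setOf_adj_abs_sub (hG : G.edgeSet.Nonempty) :
    {d | ∃ u v, G.Adj u v ∧ d = |ρ u - ρ v|}.Nonempty :=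
  let ⟨u, v, huv⟩ := exists_adj_of_edgeSet_nonempty hG
  ⟨_, u, v, huv, rfl⟩

omit [Fintype V] in
lemma nonempty_setOf_ne_abs_sub (hG : G.edgeSet.Nonempty) :
    {d | ∃ u v : V, u ≠ v ∧ d = |ρ u - ρ v|}.Nonempty :=
  let ⟨u, v, huv⟩ := exists_adj_of_edgeSet_nonempty hG
  ⟨_, u, v, huv.ne, rfl⟩

lemma minE1_le_abs_sub (h : G.Adj u v) : minE1 G ρ ≤ |ρ u - ρ v| :=
  csInf_le (finite_setOf_abs_sub G.Adj ρ).bddBelow ⟨u, v, h, rfl⟩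

lemma abs_sub_le_maxE1 (h : G.Adj u v) : |ρ u - ρ v| ≤ maxE1 G ρ :=
  le_csSup (finite_setOf_abs_sub G.Adj ρ).bddAbove ⟨u, v, h, rfl⟩

lemma minP1_le_abs_sub (h : u ≠ v) : minP1 ρ ≤ |ρ u - ρ v| :=
  csInf_le (finite_setOf_abs_sub (· ≠ ·) ρ).bddBelow ⟨u, v, h, rfl⟩

lemma abs_sub_le_maxP1 (h : u ≠ v) : |ρ u - ρ v| ≤ maxP1 ρ :=
  le_csSup (finite_setOf_abs_sub (· ≠ ·) ρ).bddAbove ⟨u, v, h, rfl⟩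

lemma maxE1_nonneg (hG : G.edgeSet.Nonempty) : 0 ≤ maxE1 G ρ :=
  let ⟨_, _, huv⟩ := exists_adj_of_edgeSet_nonempty hG
  (abs_nonneg _).trans (abs_sub_le_maxE1 huv)

lemma maxP1_nonneg (hG : G.edgeSet.Nonempty) : 0 ≤ maxP1 ρ :=
  let ⟨_, _, huv⟩ := exists_adj_of_edgeSet_nonempty hG
  (abs_nonneg _).trans (abs_sub_le_maxP1 huv.ne)

lemma maxE1_le_maxP1 (hG : G.edgeSet.Nonempty) : maxE1 G ρ ≤ maxP1 ρ :=
  csSup_le (nonempty_setOf_adj_abs_sub hG) <| by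
    rintro _ ⟨u, v, huv, rfl⟩
    exact abs_sub_le_maxP1 huv.ne

lemma minE1_pos (hG : G.edgeSet.Nonempty) (hρ : NED1 G ρ) : 0 < minE1 G ρ := by
  obtain ⟨u, v, huv, h⟩ : minE1 G ρ ∈ _ :=
    (nonempty_setOf_adj_abs_sub hG).csInf_mem (finite_setOf_abs_sub G.Adj ρ)
  exact h ▸ abs_pos.2 (sub_ne_zero.2 (hρ huv))

lemma minP1_pos (hG : G.edgeSet.Nonempty) (hρ : Function.Injective ρ) : 0 < minP1 ρ := by
  obtain ⟨u, v, huv, h⟩ : minP1 ρ ∈ _ :=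
    (nonempty_setOf_ne_abs_sub (ρ := ρ) hG).csInf_mem (finite_setOf_abs_sub (· ≠ ·) ρ)
  exact h ▸ abs_pos.2 (sub_ne_zero.2 (hρ.ne huv))

omit [Fintype V] in
lemma NED1_of_injective (hρ : Function.Injective ρ) : NED1 G ρ :=
  fun _ _ huv h => huv.ne (hρ h)

end Distances

omit [Fintype V] in
lemma colorable_of_forall_adj_abs_sub_lt {G : SimpleGraph V} (f : V → ℤ) {k : ℕ} (hk : 0 < k)
    (hf : ∀ ⦃u v⦄, G.Adj u v → f u ≠ f v ∧ |f u - f v| < k) : G.Colorable k := by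
  have : NeZero k := ⟨hk.ne'⟩
  have C : G.Coloring (ZMod k) := Coloring.mk (fun v => (f v : ZMod k)) fun {u v} huv hc => by
    rw [ZMod.intCast_eq_intCast_iff_dvd_sub] at hc
    obtain ⟨hne, hlt⟩ := hf huv
    refine hne (sub_eq_zero.1 (Int.eq_zero_of_abs_lt_dvd ?_ hlt))
    rwa [← dvd_neg, neg_sub] at hc
  simpa [ZMod.card] using C.colorable

lemma colorable_of_one_le_abs_sub_of_sub_le [Nonempty V] {G : SimpleGraph V} {x : V → ℝ} {L : ℝ}
    (hadj : ∀ ⦃u v⦄, G.Adj u v → 1 ≤ |x u - x v|) (hdiam : ∀ u v, x u - x v ≤ L) :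
    G.Colorable (⌊L⌋₊ + 1) := by
  obtain ⟨a, -, ha⟩ := univ.exists_min_image x univ_nonempty
  have hL : 0 ≤ L := by simpa using hdiam a a
  have hrange : ∀ w, 0 ≤ ⌊x w - x a⌋ ∧ ⌊x w - x a⌋ ≤ ⌊L⌋₊ := fun w =>
    ⟨Int.floor_nonneg.2 (sub_nonneg.2 (ha w (mem_univ w))),
      Int.natCast_floor_eq_floor hL ▸ Int.floor_le_floor (hdiam w a)⟩
  refine colorable_of_forall_adj_abs_sub_lt (fun v => ⌊x v - x a⌋) (Nat.succ_pos _)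
    fun u v huv => ⟨fun h => ?_, ?_⟩
  · have := Int.abs_sub_lt_one_of_floor_eq_floor h
    rw [sub_sub_sub_cancel_right] at this
    linarith [hadj huv]
  · have := abs_sub_le_of_nonneg_of_le (hrange u).1 (hrange u).2 (hrange v).1 (hrange v).2
    push_cast
    omega

lemma fract_sub_lt_one_sub {a d s : ℝ} (hsd : s ≤ d) (hd : d ≤ 1 - s) (ha : 1 - s ≤ Int.fract a) :
    Int.fract (a - d) < 1 - s := by
  have : Int.fract (a - d) = Int.fract a - d :=
    Int.fract_eq_iff.2 ⟨by linarith, by linarith [Int.fract_lt_one a], ⌊a⌋, by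
      rw [Int.fract]; ring⟩
  linarith [Int.fract_lt_one a]

/-- Pigeonhole over the `n + 1` shifts `θ = j / (n + 1)`, `j ≤ n`: each point rules out at most
one of them. -/
lemma exists_forall_fract_sub_lt {ι : Type*} [Fintype ι] (x : ι → ℝ) :
    ∃ θ : ℝ, ∀ i, Int.fract (x i - θ) < 1 - 1 / (Fintype.card ι + 1) := by
  set n := Fintype.card ι
  set s : ℝ := 1 / (n + 1)
  have hs : 0 < s := by positivity
  have hns : n * s = 1 - s := by simp only [s]; field_simp; ring
  by_contra! hbad
  choose f hf using fun j : Fin (n + 1) => hbad ((j : ℕ) * s)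
  obtain ⟨i, j, hij, hfij⟩ := Fintype.exists_ne_map_eq_of_card_lt f (by simp [n])
  wlog hlt : i < j generalizing i j
  · exact this j i hij.symm hfij.symm (lt_of_le_of_ne (not_lt.1 hlt) hij.symm)
  have hi : ((i : ℕ) : ℝ) + 1 ≤ (j : ℕ) := by exact_mod_cast hlt
  have hj : ((j : ℕ) : ℝ) ≤ n := by exact_mod_cast Nat.lt_succ_iff.1 j.isLt
  have key := fract_sub_lt_one_sub (d := ((j : ℕ) - (i : ℕ)) * s) (by nlinarith) (by nlinarith)
    (hf i)
  rw [hfij, show x (f j) - (i : ℕ) * s - ((j : ℕ) - (i : ℕ)) * s = x (f j) - (j : ℕ) * s by ring]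
    at key
  exact (hf j).not_gt key

lemma abs_floor_sub_floor_lt {a b s t : ℝ} (hab : |a - b| < t + s) (ha : Int.fract a < 1 - s)
    (hb : Int.fract b < 1 - s) : |((⌊a⌋ - ⌊b⌋ : ℤ) : ℝ)| < t + 1 := by
  rw [Int.fract] at ha hb
  have := Int.floor_le a
  have := Int.floor_le b
  rw [abs_lt] at hab ⊢
  push_cast
  constructor <;> linarith

lemma colorable_of_one_le_abs_sub_lt {G : SimpleGraph V} {x : V → ℝ} {k : ℕ} (hk : 0 < k)
    (hadj : ∀ ⦃u v⦄, G.Adj u v →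
      1 ≤ |x u - x v| ∧ |x u - x v| < k - 1 + 1 / (Fintype.card V + 1)) :
    G.Colorable k := by
  obtain ⟨θ, hθ⟩ := exists_forall_fract_sub_lt x
  refine colorable_of_forall_adj_abs_sub_lt (fun v => ⌊x v - θ⌋) hk
    fun u v huv => ⟨fun h => ?_, ?_⟩
  · have := Int.abs_sub_lt_one_of_floor_eq_floor h
    rw [sub_sub_sub_cancel_right] at this
    linarith [(hadj huv).1]
  · have := abs_floor_sub_floor_lt (t := k - 1)
      (by rw [sub_sub_sub_cancel_right]; exact (hadj huv).2) (hθ u) (hθ v)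
    rw [sub_add_cancel] at this
    exact_mod_cast this

lemma card_le_natFloor_add_one {ι : Type*} {s : Finset ι} {x : ι → ℝ} {a b : ℝ}
    (hsep : (s : Set ι).Pairwise fun u v => 1 ≤ |x u - x v|) (hs : ∀ w ∈ s, x w ∈ Set.Icc a b) :
    #s ≤ ⌊b - a⌋₊ + 1 := by
  refine (card_le_card_of_injOn (fun w => ⌊x w - a⌋₊) (fun w hw => ?_) fun u hu v hv h => ?_).trans
    (card_range _).le
  · exact mem_range_succ_iff.2 (Nat.floor_le_floor (by linarith [(hs w hw).2]))
  · by_contra huv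
    have h' := congrArg (fun n : ℕ => (n : ℤ)) h
    simp only [Int.natCast_floor_eq_floor (sub_nonneg.2 (hs u hu).1),
      Int.natCast_floor_eq_floor (sub_nonneg.2 (hs v hv).1)] at h'
    have := Int.abs_sub_lt_one_of_floor_eq_floor h'
    rw [sub_sub_sub_cancel_right] at this
    linarith [hsep hu hv huv]

lemma card_filter_lt_le_card_filter_lt_add {x : V → ℝ}
    (hsep : Pairwise fun u v => 1 ≤ |x u - x v|) {u v : V} (h : x u ≤ x v) :
    #{w | x w < x v} ≤ #{w | x w < x u} + ⌊x v - x u⌋₊ := by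
  classical
  set T : Finset V := {w | x u ≤ x w ∧ x w ≤ x v}
  have hsub : ({w | x w < x v} : Finset V) ⊆ ({w | x w < x u} : Finset V) ∪ T.erase v := by
    intro w hw
    simp only [T, mem_union, mem_filter, mem_univ, true_and, mem_erase] at hw ⊢
    by_cases hwu : x w < x u
    · exact Or.inl hwu
    · exact Or.inr ⟨by rintro rfl; exact hw.false, not_lt.1 hwu, hw.le⟩
  have hT : #T ≤ ⌊x v - x u⌋₊ + 1 :=
    card_le_natFloor_add_one (hsep.set_pairwise _) fun w hw => by simpa [T] using hw
  have hvT : v ∈ T := by simp [T, h]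
  calc #{w | x w < x v} ≤ #(({w | x w < x u} : Finset V) ∪ T.erase v) := card_le_card hsub
    _ ≤ #{w | x w < x u} + #(T.erase v) := card_union_le _ _
    _ ≤ #{w | x w < x u} + ⌊x v - x u⌋₊ := by rw [card_erase_of_mem hvT]; omega

lemma colorable_of_pairwise_one_le_abs_sub {G : SimpleGraph V} {x : V → ℝ} {L : ℝ}
    (hsep : Pairwise fun u v => 1 ≤ |x u - x v|) (hadj : ∀ ⦃u v⦄, G.Adj u v → |x u - x v| ≤ L) :
    G.Colorable (⌊L⌋₊ + 1) := by
  refine colorable_of_forall_adj_abs_sub_lt (fun v => (#{w | x w < x v} : ℤ)) (Nat.succ_pos _)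
    fun u v huv => ?_
  wlog h : x u < x v generalizing u v
  · have hne : x u ≠ x v := fun he => by
      have : 1 ≤ |x u - x v| := hsep huv.ne
      rw [he, sub_self, abs_zero] at this
      linarith
    obtain ⟨h1, h2⟩ := this v u huv.symm (lt_of_le_of_ne (not_lt.1 h) hne.symm)
    exact ⟨h1.symm, by rwa [abs_sub_comm]⟩
  have hsub : ({w | x w < x u} : Finset V) ⊆ ({w | x w < x v} : Finset V) :=
    monotone_filter_right _ fun _ _ hw => hw.trans h
  have hlt : #{w | x w < x u} < #{w | x w < x v} :=
    card_lt_card <| (ssubset_iff_of_subset hsub).2 ⟨u, by simp [h], by simp⟩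
  have hle := card_filter_lt_le_card_filter_lt_add hsep h.le
  have hL : ⌊x v - x u⌋₊ ≤ ⌊L⌋₊ :=
    Nat.floor_le_floor ((le_abs_self _).trans (abs_sub_comm (x u) (x v) ▸ hadj huv))
  refine ⟨by omega, ?_⟩
  rw [abs_lt]
  push_cast
  omega

section Representations

variable {G : SimpleGraph V} {ρ : V → ℝ}

omit [Fintype V] in
lemma natCast_chromaticNumber_toNat_sub_one_le {r : ℝ} (hr : 0 ≤ r)
    (h : G.Colorable (⌊r⌋₊ + 1)) : (G.chromaticNumber.toNat : ℝ) - 1 ≤ r := by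
  have : (G.chromaticNumber.toNat : ℝ) ≤ ⌊r⌋₊ + 1 := by
    exact_mod_cast ENat.toNat_le_of_le_natCast h.chromaticNumber_le
  linarith [Nat.floor_le hr]

lemma two_le_chromaticNumber_toNat (hG : G.edgeSet.Nonempty) : 2 ≤ G.chromaticNumber.toNat := by
  have hne : G.chromaticNumber ≠ ⊤ :=
    chromaticNumber_ne_top_iff_exists.2 ⟨_, G.colorable_of_fintype⟩
  simpa using ENat.toNat_le_toNat (two_le_chromaticNumber_iff_ne_bot.2 (edgeSet_nonempty.1 hG)) hne

lemma one_le_abs_natCast_sub_natCast {a b : ℕ} (h : a ≠ b) : (1 : ℝ) ≤ |(a : ℝ) - b| := by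
  have : (1 : ℤ) ≤ |(a : ℤ) - b| := Int.one_le_abs (sub_ne_zero.2 (Nat.cast_injective.ne h))
  exact_mod_cast this

lemma exists_NED1_maxP1_div_minE1_le {k : ℕ} (hG : G.edgeSet.Nonempty) (h : G.Colorable k) :
    ∃ ρ : V → ℝ, NED1 G ρ ∧ maxP1 ρ / minE1 G ρ ≤ k - 1 := by
  obtain ⟨C⟩ := h
  have hne : ∀ ⦃u v⦄, G.Adj u v → (C u : ℕ) ≠ C v := fun u v huv h => C.valid huv (Fin.ext h)
  refine ⟨fun v => (C v : ℕ), fun u v huv h => hne huv (Nat.cast_injective h), ?_⟩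
  have hmin : 1 ≤ minE1 G fun v => ((C v : ℕ) : ℝ) :=
    le_csInf (nonempty_setOf_adj_abs_sub hG) <| by
      rintro _ ⟨u, v, huv, rfl⟩
      exact one_le_abs_natCast_sub_natCast (hne huv)
  have hmax : maxP1 (fun v => ((C v : ℕ) : ℝ)) ≤ k - 1 :=
    csSup_le (nonempty_setOf_ne_abs_sub hG) <| by
      rintro _ ⟨u, v, -, rfl⟩
      have hu : ((C u : ℕ) : ℝ) + 1 ≤ k := by exact_mod_cast (C u).isLt
      have hv : ((C v : ℕ) : ℝ) + 1 ≤ k := by exact_mod_cast (C v).isLt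
      rw [abs_sub_le_iff]
      constructor <;> linarith [(C u : ℕ).cast_nonneg (α := ℝ), (C v : ℕ).cast_nonneg (α := ℝ)]
  exact (div_le_self (maxP1_nonneg hG) hmin).trans hmax

lemma natCast_chromaticNumber_toNat_sub_one_le_maxP1_div_minE1 (hG : G.edgeSet.Nonempty)
    (hρ : NED1 G ρ) : (G.chromaticNumber.toNat : ℝ) - 1 ≤ maxP1 ρ / minE1 G ρ := by
  obtain ⟨u₀, -, -⟩ := exists_adj_of_edgeSet_nonempty hG
  have : Nonempty V := ⟨u₀⟩
  have hm := minE1_pos hG hρ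
  refine natCast_chromaticNumber_toNat_sub_one_le (div_nonneg (maxP1_nonneg hG) hm.le)
    (colorable_of_one_le_abs_sub_of_sub_le (x := fun v => ρ v / minE1 G ρ)
      (fun u v huv => ?_) fun u v => ?_)
  · rw [abs_div_sub_div hm, one_le_div hm]
    exact minE1_le_abs_sub huv
  · rw [← sub_div]
    gcongr
    rcases eq_or_ne u v with rfl | huv
    · simpa using maxP1_nonneg hG
    · exact (le_abs_self _).trans (abs_sub_le_maxP1 huv)

lemma natCast_chromaticNumber_toNat_sub_two_add_le_maxE1_div_minE1 (hG : G.edgeSet.Nonempty)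
    (hρ : NED1 G ρ) :
    (G.chromaticNumber.toNat : ℝ) - 2 + 1 / (Fintype.card V + 1) ≤ maxE1 G ρ / minE1 G ρ := by
  obtain ⟨k, hk⟩ : ∃ k, G.chromaticNumber.toNat = k + 2 :=
    ⟨_, (Nat.sub_add_cancel (two_le_chromaticNumber_toNat hG)).symm⟩
  have hm := minE1_pos hG hρ
  by_contra! hlt
  have hcol : G.Colorable (k + 1) :=
    colorable_of_one_le_abs_sub_lt (x := fun v => ρ v / minE1 G ρ) k.succ_pos fun u v huv => by
      rw [abs_div_sub_div hm, one_le_div hm]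
      refine ⟨minE1_le_abs_sub huv, ?_⟩
      calc |ρ u - ρ v| / minE1 G ρ ≤ maxE1 G ρ / minE1 G ρ := by
            gcongr
            exact abs_sub_le_maxE1 huv
        _ < _ := by push_cast [hk] at hlt ⊢; linarith
  have := ENat.toNat_le_of_le_natCast hcol.chromaticNumber_le
  omega

lemma natCast_chromaticNumber_toNat_sub_one_le_maxE1_div_minP1 (hG : G.edgeSet.Nonempty)
    (hρ : Function.Injective ρ) : (G.chromaticNumber.toNat : ℝ) - 1 ≤ maxE1 G ρ / minP1 ρ := by
  have hp := minP1_pos hG hρ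
  refine natCast_chromaticNumber_toNat_sub_one_le (div_nonneg (maxE1_nonneg hG) hp.le)
    (colorable_of_pairwise_one_le_abs_sub (x := fun v => ρ v / minP1 ρ)
      (fun u v huv => ?_) fun u v huv => ?_)
  · dsimp only
    rw [abs_div_sub_div hp, one_le_div hp]
    exact minP1_le_abs_sub huv
  · rw [abs_div_sub_div hp]
    gcongr
    exact abs_sub_le_maxE1 huv

end Representations

section Parameters

variable {G : SimpleGraph V}

lemma pw1_eq (hG : G.edgeSet.Nonempty) : pw1 G = G.chromaticNumber.toNat - 1 := by
  obtain ⟨ρ, hρ, hle⟩ :=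
    exists_NED1_maxP1_div_minE1_le hG (colorable_chromaticNumber_of_fintype G)
  have hbdd : BddBelow {r | ∃ ρ : V → ℝ, NED1 G ρ ∧ r = maxP1 ρ / minE1 G ρ} := ⟨0, by
    rintro _ ⟨ρ, hρ, rfl⟩
    exact div_nonneg (maxP1_nonneg hG) (minE1_pos hG hρ).le⟩
  refine le_antisymm ((csInf_le hbdd ⟨ρ, hρ, rfl⟩).trans hle) (le_csInf ⟨_, ρ, hρ, rfl⟩ ?_)
  rintro _ ⟨ρ, hρ, rfl⟩
  exact natCast_chromaticNumber_toNat_sub_one_le_maxP1_div_minE1 hG hρ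

lemma dc1_le_pw1 (hG : G.edgeSet.Nonempty) : dc1 G ≤ pw1 G := by
  have hbdd : BddBelow {r | ∃ ρ : V → ℝ, NED1 G ρ ∧ r = maxE1 G ρ / minE1 G ρ} := ⟨0, by
    rintro _ ⟨ρ, hρ, rfl⟩
    exact div_nonneg (maxE1_nonneg hG) (minE1_pos hG hρ).le⟩
  obtain ⟨ρ, hρ⟩ := exists_injective_real (V := V)
  refine le_csInf ⟨_, ρ, NED1_of_injective hρ, rfl⟩ ?_
  rintro _ ⟨ρ, hρ, rfl⟩
  exact (csInf_le hbdd ⟨ρ, hρ, rfl⟩).trans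
    (div_le_div_of_nonneg_right (maxE1_le_maxP1 hG) (minE1_pos hG hρ).le)

lemma natCast_chromaticNumber_toNat_sub_two_lt_dc1 (hG : G.edgeSet.Nonempty) :
    (G.chromaticNumber.toNat : ℝ) - 2 < dc1 G := by
  obtain ⟨ρ, hρ⟩ := exists_injective_real (V := V)
  have hpos : (0 : ℝ) < 1 / (Fintype.card V + 1) := by positivity
  refine (lt_add_of_pos_right _ hpos).trans_le (le_csInf ⟨_, ρ, NED1_of_injective hρ, rfl⟩ ?_)
  rintro _ ⟨ρ, hρ, rfl⟩
  exact natCast_chromaticNumber_toNat_sub_two_add_le_maxE1_div_minE1 hG hρ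

lemma natCast_chromaticNumber_toNat_sub_one_le_re1 (hG : G.edgeSet.Nonempty) :
    (G.chromaticNumber.toNat : ℝ) - 1 ≤ re1 G := by
  obtain ⟨ρ, hρ⟩ := exists_injective_real (V := V)
  refine le_csInf ⟨_, ρ, hρ, rfl⟩ ?_
  rintro _ ⟨ρ, hρ, rfl⟩
  exact natCast_chromaticNumber_toNat_sub_one_le_maxE1_div_minP1 hG hρ

end Parameters

/-- `⌈dc₁(G)⌉ = pw₁(G) ≤ re₁(G)`. -/
theorem stmt_11 {V : Type*} [Fintype V] (G : SimpleGraph V) (hG : G.edgeSet.Nonempty) :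
    (⌈dc1 G⌉ : ℝ) = pw1 G ∧ pw1 G ≤ re1 G := by
  have hpw := pw1_eq hG
  have hceil : ⌈dc1 G⌉ = (G.chromaticNumber.toNat : ℤ) - 1 := by
    rw [Int.ceil_eq_iff]
    push_cast
    constructor
    · linarith [natCast_chromaticNumber_toNat_sub_two_lt_dc1 hG]
    · linarith [dc1_le_pw1 hG]
  refine ⟨?_, hpw ▸ natCast_chromaticNumber_toNat_sub_one_le_re1 hG⟩
  rw [hceil, hpw]
  push_cast
  ring
end
end

section
/- For every n there exists a finite simple graph G with re(G) = √2 that contains K_n as a minor; in particular, graphs with resolution coefficient √2 can have arbitrarily large clique minors (and arbitrarily large genus). -/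
open Real

noncomputable section

variable {V : Type*} [Fintype V]

/-- `H` is a minor of `G`: there are disjoint nonempty connected branch sets in `G`,
one for each vertex of `H`, with an edge of `G` between the branch sets of any two
adjacent vertices of `H`. -/
def IsMinor {W V : Type*} (H : SimpleGraph W) (G : SimpleGraph V) : Prop :=
  ∃ f : W → Set V, (∀ w, (f w).Nonempty) ∧ (∀ w, (G.induce (f w)).Connected) ∧
    (Pairwise fun w w' => Disjoint (f w) (f w')) ∧
    ∀ w w', H.Adj w w' → ∃ a ∈ f w, ∃ b ∈ f w', G.Adj a b


/-!
The witness is the king's graph on a large square grid.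

Drawn on the integer lattice, its edges have length at most `√2` while distinct vertices are at
distance at least `1`. Conversely it contains `K₄`, and among any four points of the plane some two
are at least `√2` times the minimum distance apart: otherwise, after scaling, all six squared
distances lie in `[1, 2)`, where the Gram determinant of the three vectors from one point to the
others is positive (it is concave in each squared distance not involving that point, so it suffices
to check the eight corners), whereas three vectors in the plane have vanishing Gram determinant.

For the `Kₙ` minor, the branch sets are V-shaped lattice paths built from diagonals and
anti-diagonals; two such paths cross along a pair of crossing diagonal edges without sharing a
vertex, and next to the crossing there is an edge joining them.
-/

/-- Four times the Gram determinant of vectors `a, b, c` with `‖a‖² = A`, `‖b‖² = B`,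
`‖c‖² = C`, `‖a - b‖² = s`, `‖a - c‖² = t`, `‖b - c‖² = r`. -/
def gramDet (A B C s t r : ℝ) : ℝ :=
  4 * A * B * C + (A + B - s) * (A + C - t) * (B + C - r)
    - A * (B + C - r) ^ 2 - B * (A + C - t) ^ 2 - C * (A + B - s) ^ 2

lemma gramDet_norm_sq_eq_zero (a b c : Pt) :
    gramDet (‖a‖ ^ 2) (‖b‖ ^ 2) (‖c‖ ^ 2) (‖a - b‖ ^ 2) (‖a - c‖ ^ 2) (‖b - c‖ ^ 2) = 0 := by
  simp only [EuclideanSpace.norm_sq_eq, Fin.sum_univ_two, PiLp.sub_apply, Real.norm_eq_abs,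
    sq_abs]
  unfold gramDet
  ring

lemma gramDet_corner_pos {A B C s t r : ℝ} (hA : A ∈ Set.Ico 1 2) (hB : B ∈ Set.Ico 1 2)
    (hC : C ∈ Set.Ico 1 2) (hs : s = 1 ∨ s = 2) (ht : t = 1 ∨ t = 2) (hr : r = 1 ∨ r = 2) :
    0 < gramDet A B C s t r := by
  obtain ⟨hA1, hA2⟩ := hA
  obtain ⟨hB1, hB2⟩ := hB
  obtain ⟨hC1, hC2⟩ := hC
  unfold gramDet
  rcases hs with rfl | rfl <;> rcases ht with rfl | rfl <;> rcases hr with rfl | rfl <;>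
  nlinarith [mul_nonneg (sub_nonneg.2 hA1) (sub_nonneg.2 hB1),
    mul_nonneg (sub_nonneg.2 hB1) (sub_nonneg.2 hC1),
    mul_nonneg (sub_nonneg.2 hA1) (sub_nonneg.2 hC1),
    mul_pos (sub_pos.2 hA2) (sub_pos.2 hB2), mul_pos (sub_pos.2 hB2) (sub_pos.2 hC2),
    mul_pos (sub_pos.2 hA2) (sub_pos.2 hC2)]

lemma interpolation_pos {a b c x : ℝ} (ha : 0 < a) (hb : 0 < b) (hc : 0 ≤ c)
    (hx : x ∈ Set.Icc 1 2) : 0 < (2 - x) * a + (x - 1) * b + c * ((x - 1) * (2 - x)) := by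
  obtain ⟨hx1, hx2⟩ := hx
  have hbump : 0 ≤ c * ((x - 1) * (2 - x)) :=
    mul_nonneg hc (mul_nonneg (by linarith) (by linarith))
  nlinarith [lt_min ha hb,
    mul_le_mul_of_nonneg_left (min_le_left a b) (by linarith : (0 : ℝ) ≤ 2 - x),
    mul_le_mul_of_nonneg_left (min_le_right a b) (by linarith : (0 : ℝ) ≤ x - 1)]

lemma gramDet_pos {A B C s t r : ℝ} (hA : A ∈ Set.Ico 1 2) (hB : B ∈ Set.Ico 1 2)
    (hC : C ∈ Set.Ico 1 2) (hs : s ∈ Set.Icc 1 2) (ht : t ∈ Set.Icc 1 2) (hr : r ∈ Set.Icc 1 2) :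
    0 < gramDet A B C s t r := by
  have r_ends {s t : ℝ} (hs : s = 1 ∨ s = 2) (ht : t = 1 ∨ t = 2) :
      0 < gramDet A B C s t r := by
    have : gramDet A B C s t r = (2 - r) * gramDet A B C s t 1 + (r - 1) * gramDet A B C s t 2
        + A * ((r - 1) * (2 - r)) := by unfold gramDet; ring
    rw [this]
    exact interpolation_pos (gramDet_corner_pos hA hB hC hs ht (.inl rfl))
      (gramDet_corner_pos hA hB hC hs ht (.inr rfl)) (by linarith [hA.1]) hr
  have t_ends {s : ℝ} (hs : s = 1 ∨ s = 2) : 0 < gramDet A B C s t r := by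
    have : gramDet A B C s t r = (2 - t) * gramDet A B C s 1 r + (t - 1) * gramDet A B C s 2 r
        + B * ((t - 1) * (2 - t)) := by unfold gramDet; ring
    rw [this]
    exact interpolation_pos (r_ends hs (.inl rfl)) (r_ends hs (.inr rfl)) (by linarith [hB.1]) ht
  have : gramDet A B C s t r = (2 - s) * gramDet A B C 1 t r + (s - 1) * gramDet A B C 2 t r
      + C * ((s - 1) * (2 - s)) := by unfold gramDet; ring
  rw [this]
  exact interpolation_pos (t_ends (.inl rfl)) (t_ends (.inr rfl)) (by linarith [hC.1]) hs

theorem exists_sqrt_two_mul_le_dist (p : Fin 4 → Pt) {m : ℝ}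
    (hp : Pairwise fun i j => m ≤ dist (p i) (p j)) :
    ∃ i j, i ≠ j ∧ √2 * m ≤ dist (p i) (p j) := by
  rcases le_or_gt m 0 with hm | hm
  · exact ⟨0, 1, by decide,
      (mul_nonpos_of_nonneg_of_nonpos (sqrt_nonneg 2) hm).trans dist_nonneg⟩
  by_contra! hlt
  have hsq {i j : Fin 4} (hij : i ≠ j) : ‖m⁻¹ • (p i - p j)‖ ^ 2 ∈ Set.Ico 1 2 := by
    rw [norm_smul, norm_inv, Real.norm_of_nonneg hm.le, ← dist_eq_norm, inv_mul_eq_div]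
    have h1 : 1 ≤ dist (p i) (p j) / m := (one_le_div hm).2 (hp hij)
    have h2 : dist (p i) (p j) / m < √2 := (div_lt_iff₀ hm).2 (by linarith [hlt i j hij])
    constructor
    · nlinarith
    · calc _ < √2 ^ 2 := by gcongr
        _ = 2 := sq_sqrt zero_le_two
  have hzero :=
    gramDet_norm_sq_eq_zero (m⁻¹ • (p 0 - p 3)) (m⁻¹ • (p 1 - p 3)) (m⁻¹ • (p 2 - p 3))
  simp only [← smul_sub, sub_sub_sub_cancel_right] at hzero
  have hpos := gramDet_pos (hsq (by decide : (0 : Fin 4) ≠ 3)) (hsq (by decide : (1 : Fin 4) ≠ 3))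
    (hsq (by decide : (2 : Fin 4) ≠ 3))
    (Set.Ico_subset_Icc_self (hsq (by decide : (0 : Fin 4) ≠ 1)))
    (Set.Ico_subset_Icc_self (hsq (by decide : (0 : Fin 4) ≠ 2)))
    (Set.Ico_subset_Icc_self (hsq (by decide : (1 : Fin 4) ≠ 2)))
  linarith

section Resolution

variable {V : Type*} [Finite V]

lemma finite_dist_image (ρ : V → Pt) (P : V → V → Prop) :
    {d | ∃ u v, P u v ∧ d = dist (ρ u) (ρ v)}.Finite :=
  (Set.finite_range fun x : V × V => dist (ρ x.1) (ρ x.2)).subset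
    fun _ ⟨u, v, _, hd⟩ => ⟨(u, v), hd.symm⟩

lemma dist_le_maxE (G : SimpleGraph V) (ρ : V → Pt) {u v : V} (h : G.Adj u v) :
    dist (ρ u) (ρ v) ≤ maxE G ρ :=
  le_csSup (finite_dist_image ρ G.Adj).bddAbove ⟨u, v, h, rfl⟩

lemma minP_le_dist (ρ : V → Pt) {u v : V} (h : u ≠ v) : minP ρ ≤ dist (ρ u) (ρ v) :=
  csInf_le (finite_dist_image ρ (· ≠ ·)).bddBelow ⟨u, v, h, rfl⟩

lemma minP_pos {ρ : V → Pt} (hρ : Function.Injective ρ) {u v : V} (h : u ≠ v) :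
    0 < minP ρ := by
  have hne : {d | ∃ a b : V, a ≠ b ∧ d = dist (ρ a) (ρ b)}.Nonempty := ⟨_, u, v, h, rfl⟩
  obtain ⟨a, b, hab, hd⟩ := hne.csInf_mem (finite_dist_image ρ (· ≠ ·))
  rw [minP, hd]
  exact dist_pos.2 (hρ.ne hab)

lemma sqrt_two_le_maxE_div_minP {G : SimpleGraph V} {v : Fin 4 → V}
    (hv : Pairwise fun i j => G.Adj (v i) (v j)) {ρ : V → Pt} (hρ : Function.Injective ρ) :
    √2 ≤ maxE G ρ / minP ρ := by
  rw [le_div_iff₀ (minP_pos hρ (hv (show (0 : Fin 4) ≠ 1 by decide)).ne)]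
  obtain ⟨i, j, hij, hd⟩ :=
    exists_sqrt_two_mul_le_dist (ρ ∘ v) fun i j hij => minP_le_dist ρ (hv hij).ne
  exact hd.trans (dist_le_maxE G ρ (hv hij))

theorem re_eq_sqrt_two {G : SimpleGraph V} {v : Fin 4 → V}
    (hv : Pairwise fun i j => G.Adj (v i) (v j)) {ρ : V → Pt} (hρ : Function.Injective ρ)
    (hE : ∀ u w, G.Adj u w → dist (ρ u) (ρ w) ≤ √2)
    (hP : ∀ u w, u ≠ w → 1 ≤ dist (ρ u) (ρ w)) :
    re G = √2 := by
  have hlower : ∀ r ∈ {r | ∃ ρ : V → Pt, Function.Injective ρ ∧ r = maxE G ρ / minP ρ},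
      √2 ≤ r := by
    rintro r ⟨ρ, hρ, rfl⟩
    exact sqrt_two_le_maxE_div_minP hv hρ
  have hv01 : G.Adj (v 0) (v 1) := hv (by decide)
  have hmaxE : maxE G ρ ≤ √2 :=
    csSup_le ⟨_, _, _, hv01, rfl⟩ fun _ ⟨u, w, huw, hd⟩ => hd ▸ hE u w huw
  have hminP : 1 ≤ minP ρ :=
    le_csInf ⟨_, _, _, hv01.ne, rfl⟩ fun _ ⟨u, w, huw, hd⟩ => hd ▸ hP u w huw
  refine le_antisymm ?_ (le_csInf ⟨_, ρ, hρ, rfl⟩ hlower)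
  calc re G ≤ maxE G ρ / minP ρ := csInf_le ⟨√2, hlower⟩ ⟨ρ, hρ, rfl⟩
    _ ≤ maxE G ρ := div_le_self (dist_nonneg.trans (dist_le_maxE G ρ hv01)) hminP
    _ ≤ √2 := hmaxE

end Resolution

def kingGraph : SimpleGraph (ℤ × ℤ) where
  Adj p q := p ≠ q ∧ |p.1 - q.1| ≤ 1 ∧ |p.2 - q.2| ≤ 1
  symm := ⟨fun p q ⟨hne, h1, h2⟩ =>
    ⟨hne.symm, abs_sub_comm p.1 q.1 ▸ h1, abs_sub_comm p.2 q.2 ▸ h2⟩⟩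
  loopless := ⟨fun _ h => h.1 rfl⟩

lemma kingGraph_adj_iff {p q : ℤ × ℤ} :
    kingGraph.Adj p q ↔ p ≠ q ∧ |p.1 - q.1| ≤ 1 ∧ |p.2 - q.2| ≤ 1 := Iff.rfl

section GridDrawing

variable {V : Type*} (c : V → ℤ × ℤ)

def gridDrawing (v : V) : Pt := !₂[((c v).1 : ℝ), ((c v).2 : ℝ)]

lemma dist_gridDrawing (u v : V) :
    dist (gridDrawing c u) (gridDrawing c v) =
      √((((c u).1 - (c v).1 : ℤ) : ℝ) ^ 2 + (((c u).2 - (c v).2 : ℤ) : ℝ) ^ 2) := by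
  simp [EuclideanSpace.dist_eq, gridDrawing, Fin.sum_univ_two, Real.dist_eq, sq_abs]

lemma dist_gridDrawing_le_sqrt_two {u v : V} (h : (kingGraph.comap c).Adj u v) :
    dist (gridDrawing c u) (gridDrawing c v) ≤ √2 := by
  obtain ⟨-, h1, h2⟩ := h
  have h1' : ((((c u).1 - (c v).1 : ℤ) : ℝ)) ^ 2 ≤ 1 := by
    rw [sq_le_one_iff_abs_le_one]; exact_mod_cast h1
  have h2' : ((((c u).2 - (c v).2 : ℤ) : ℝ)) ^ 2 ≤ 1 := by
    rw [sq_le_one_iff_abs_le_one]; exact_mod_cast h2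
  rw [dist_gridDrawing]
  gcongr
  linarith

variable {c}

lemma one_le_dist_gridDrawing (hc : Function.Injective c) {u v : V} (h : u ≠ v) :
    1 ≤ dist (gridDrawing c u) (gridDrawing c v) := by
  have one_le_sq {a : ℤ} (ha : a ≠ 0) : (1 : ℝ) ≤ (a : ℝ) ^ 2 := by
    rw [one_le_sq_iff_one_le_abs]; exact_mod_cast Int.one_le_abs ha
  have hne : (c u).1 - (c v).1 ≠ 0 ∨ (c u).2 - (c v).2 ≠ 0 := by
    by_contra! h0
    exact h (hc (Prod.ext (sub_eq_zero.1 h0.1) (sub_eq_zero.1 h0.2)))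
  rw [dist_gridDrawing, Real.one_le_sqrt]
  rcases hne with h0 | h0 <;> linarith [one_le_sq h0, sq_nonneg ((((c u).1 - (c v).1 : ℤ) : ℝ)),
    sq_nonneg ((((c u).2 - (c v).2 : ℤ) : ℝ))]

lemma gridDrawing_injective (hc : Function.Injective c) :
    Function.Injective (gridDrawing c) := fun u v h => by
  by_contra hne
  have := one_le_dist_gridDrawing hc hne
  rw [h, dist_self] at this
  linarith

end GridDrawing

section KingGraphComap

variable {V : Type*} {c : V → ℤ × ℤ} {g : ℤ × ℤ → V}

lemma comap_kingGraph_adj_iff {S : Set (ℤ × ℤ)} (hg : Set.LeftInvOn c g S) {p q : ℤ × ℤ}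
    (hp : p ∈ S) (hq : q ∈ S) : (kingGraph.comap c).Adj (g p) (g q) ↔ kingGraph.Adj p q := by
  rw [SimpleGraph.comap_adj, hg hp, hg hq]

def unitSquare : Fin 4 → ℤ × ℤ := ![(0, 0), (0, 1), (1, 0), (1, 1)]

lemma unitSquare_mem_Icc (i : Fin 4) : unitSquare i ∈ Set.Icc 0 1 := by
  fin_cases i <;> simp [unitSquare, Prod.le_def]

lemma kingGraph_adj_unitSquare :
    Pairwise fun i j => kingGraph.Adj (unitSquare i) (unitSquare j) := by
  intro i j hij
  fin_cases i <;> fin_cases j <;> simp_all [kingGraph_adj_iff, unitSquare]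

theorem re_comap_kingGraph [Finite V] (hc : Function.Injective c)
    (hg : Set.LeftInvOn c g (Set.Icc 0 1)) : re (kingGraph.comap c) = √2 :=
  re_eq_sqrt_two (v := g ∘ unitSquare)
    (fun i j hij => (comap_kingGraph_adj_iff hg (unitSquare_mem_Icc i) (unitSquare_mem_Icc j)).2
      (kingGraph_adj_unitSquare hij))
    (gridDrawing_injective hc) (fun _ _ => dist_gridDrawing_le_sqrt_two c)
    (fun _ _ => one_le_dist_gridDrawing hc)

lemma SimpleGraph.connected_induce_image_Iic {W : Type*} {G : SimpleGraph W} {L : ℕ}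
    (q : ℕ → W) (hq : ∀ k < L, G.Adj (q k) (q (k + 1))) :
    (G.induce (q '' Set.Iic L)).Connected := by
  have hmem : ∀ k ≤ L, q k ∈ q '' Set.Iic L := fun k hk => ⟨k, hk, rfl⟩
  have hreach : ∀ k (hk : k ≤ L),
      (G.induce (q '' Set.Iic L)).Reachable ⟨q 0, hmem 0 L.zero_le⟩ ⟨q k, hmem k hk⟩ := by
    intro k
    induction k with
    | zero => exact fun _ => .rfl
    | succ k ih =>
      exact fun hk => (ih (k.le_succ.trans hk)).trans (SimpleGraph.Adj.reachable (hq k hk))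
  rw [SimpleGraph.connected_iff]
  refine ⟨?_, ⟨⟨q 0, hmem 0 L.zero_le⟩⟩⟩
  rintro ⟨_, k, hk, rfl⟩ ⟨_, l, hl, rfl⟩
  exact (hreach k hk).symm.trans (hreach l hl)

/-- Down the anti-diagonal `x + y = 2i + n + 1`, then up the diagonal `x - y = 2i + n`.
As `x + y ≡ x - y (mod 2)`, paths with different `i` are disjoint; the diagonal of path `i`
crosses the anti-diagonal of path `j > i` between two horizontally adjacent points. -/
def branchPath (n i k : ℕ) : ℤ × ℤ :=
  if k ≤ n then (2 * i + k, n + 1 - k) else (2 * i + k - 1, k - n - 1)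

lemma branchPath_mem_Icc {n i k : ℕ} (hi : i < n) (hk : k ≤ 2 * n + 1) :
    branchPath n i k ∈ Set.Icc 0 ((4 * n : ℤ), (n + 1 : ℤ)) := by
  unfold branchPath
  split_ifs <;> simp only [Set.mem_Icc, Prod.le_def, Prod.fst_zero, Prod.snd_zero] <;> omega

lemma kingGraph_adj_branchPath_succ (n i k : ℕ) :
    kingGraph.Adj (branchPath n i k) (branchPath n i (k + 1)) := by
  unfold branchPath
  split_ifs <;> simp only [kingGraph_adj_iff, ne_eq, Prod.ext_iff, abs_le] <;> omega

lemma branchPath_ne {n i j k l : ℕ} (hij : i ≠ j) : branchPath n i k ≠ branchPath n j l := by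
  unfold branchPath
  split_ifs <;> simp only [ne_eq, Prod.ext_iff] <;> omega

lemma kingGraph_adj_branchPath_branchPath {n i j : ℕ} (hij : i < j) (hj : j < n) :
    kingGraph.Adj (branchPath n i (n + 1 + (j - i))) (branchPath n j (n + 1 - (j - i))) := by
  unfold branchPath
  split_ifs <;> simp only [kingGraph_adj_iff, ne_eq, Prod.ext_iff, abs_le] <;> omega

theorem top_isMinor_comap_kingGraph (n : ℕ)
    (hg : Set.LeftInvOn c g (Set.Icc 0 ((4 * n : ℤ), (n + 1 : ℤ)))) :
    IsMinor (⊤ : SimpleGraph (Fin n)) (kingGraph.comap c) := by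
  set branch : Fin n → Set V := fun i => (g ∘ branchPath n i) '' Set.Iic (2 * n + 1)
  have hmem {i : Fin n} {k : ℕ} (hk : k ≤ 2 * n + 1) := branchPath_mem_Icc i.isLt hk
  have hcross {i j : Fin n} (hij : i < j) :
      ∃ a ∈ branch i, ∃ b ∈ branch j, (kingGraph.comap c).Adj a b :=
    ⟨_, ⟨_, Set.mem_Iic.2 (by omega), rfl⟩, _, ⟨_, Set.mem_Iic.2 (by omega), rfl⟩,
      (comap_kingGraph_adj_iff hg (hmem (by omega)) (hmem (by omega))).2
        (kingGraph_adj_branchPath_branchPath hij j.isLt)⟩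
  refine ⟨branch, fun i => ⟨_, 0, by simp, rfl⟩,
    fun i => SimpleGraph.connected_induce_image_Iic _ fun k hk => ?_, fun i j hij => ?_,
    fun i j hij => ?_⟩
  · exact (comap_kingGraph_adj_iff hg (hmem hk.le) (hmem hk)).2
      (kingGraph_adj_branchPath_succ n i k)
  · refine Set.disjoint_left.2 ?_
    rintro _ ⟨k, hk, rfl⟩ ⟨l, hl, hkl⟩
    have := congrArg c hkl
    simp only [Function.comp_apply, hg (hmem hk), hg (hmem hl)] at this
    exact branchPath_ne (Fin.val_injective.ne hij).symm this
  · rcases lt_or_gt_of_ne ((SimpleGraph.top_adj i j).1 hij) with hlt | hlt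
    · exact hcross hlt
    · obtain ⟨a, ha, b, hb, hab⟩ := hcross hlt
      exact ⟨b, hb, a, ha, hab.symm⟩

end KingGraphComap

section Grid

variable (M : ℕ)

def gridCoord (v : Fin (M * M)) : ℤ × ℤ :=
  ((finProdFinEquiv.symm v).1, (finProdFinEquiv.symm v).2)

def gridVertex [NeZero M] (p : ℤ × ℤ) : Fin (M * M) :=
  finProdFinEquiv (Fin.ofNat M p.1.toNat, Fin.ofNat M p.2.toNat)

lemma gridCoord_injective : Function.Injective (gridCoord M) := by
  intro u v h
  simp only [gridCoord, Prod.ext_iff, Nat.cast_inj, Fin.val_inj] at h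
  exact finProdFinEquiv.symm.injective (Prod.ext h.1 h.2)

lemma leftInvOn_gridCoord_gridVertex [NeZero M] :
    Set.LeftInvOn (gridCoord M) (gridVertex M) (Set.Icc 0 ((M : ℤ) - 1, (M : ℤ) - 1)) := by
  rintro ⟨x, y⟩ ⟨⟨hx0, hy0⟩, hx1, hy1⟩
  simp only [Prod.fst_zero, Prod.snd_zero] at hx0 hy0 hx1 hy1
  simp only [gridCoord, gridVertex, Equiv.symm_apply_apply, Fin.val_ofNat, Prod.mk.injEq]
  rw [Nat.mod_eq_of_lt (by omega), Nat.mod_eq_of_lt (by omega)]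
  omega

end Grid

/-- For every `n` there is a graph with resolution coefficient exactly `√2`
containing `K_n` as a minor. -/
theorem stmt_18 : ∀ n : ℕ, ∃ (N : ℕ) (G : SimpleGraph (Fin N)),
    G.edgeSet.Nonempty ∧ re G = Real.sqrt 2 ∧
      IsMinor (⊤ : SimpleGraph (Fin n)) G := by
  intro n
  have hg := leftInvOn_gridCoord_gridVertex (4 * n + 2)
  have hsub {a b : ℤ} (ha : a ≤ 4 * n + 1) (hb : b ≤ 4 * n + 1) :
      Set.Icc 0 (a, b) ⊆ Set.Icc 0 (((4 * n + 2 : ℕ) : ℤ) - 1, ((4 * n + 2 : ℕ) : ℤ) - 1) :=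
    Set.Icc_subset_Icc le_rfl (Prod.mk_le_mk.2 ⟨by push_cast; omega, by push_cast; omega⟩)
  have hsquare := hg.mono (hsub (a := 1) (b := 1) (by omega) (by omega))
  refine ⟨_, kingGraph.comap (gridCoord (4 * n + 2)),
    ⟨s(gridVertex _ (0, 0), gridVertex _ (0, 1)), ?_⟩,
    re_comap_kingGraph (gridCoord_injective _) hsquare,
    top_isMinor_comap_kingGraph n (hg.mono (hsub (by omega) (by omega)))⟩
  exact (comap_kingGraph_adj_iff hsquare (unitSquare_mem_Icc 0) (unitSquare_mem_Icc 1)).2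
    (kingGraph_adj_unitSquare (by decide))
end
end
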